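/- Let (W', S') be a finite Coxeter system with longest element w₀', let τ be a length-preserving automorphism of W', let l be a positive even integer, and let W = (W')^l with the automorphism σ(w₁, w₂, …, w_l) = (τ(w_l), w₁, …, w_{l−1}). Let w₀ = (w₀', …, w₀') be the longest element of W and O its σ-conjugacy class. Then the identity element lies in O (so ℓ_R(O) = 0), and max{ℓ(x) : x ∈ W, x ≤ σ(x)w₀} = ℓ(w₀)/2, where ≤ is the Bruhat order of W. -/

import Mathlib

/-!
Since `w₀'` has maximal length, every simple reflection is a right descent of it, and hence
`ℓ(u w₀') + ℓ(u) = ℓ(w₀')` for all `u`; in particular `w₀' ^ 2 = 1`. This needs the exchange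
property, which we get from the sign action of `W'` on `W' × {±1}` (Björner–Brenti, §1.4):
`t` is a right inversion of `w` iff `w` flips the sign of `(t, 1)`, and the cocycle rule for
these signs shows that a right inversion of `a * b` is a right inversion of `b` or, conjugated
by `b`, one of `a`.

In `(W')^l` this gives `ℓ(σ(x) w₀) = ℓ(w₀) - ℓ(x)`, as `σ` preserves length. So `x ≤ σ(x) w₀`
forces `2 ℓ(x) ≤ ℓ(w₀)`, while `x = (w₀', 1, w₀', 1, …)` (here `l` is even) satisfies
`σ(x) = x w₀`, which gives both `1 ∈ O` and the value `ℓ(w₀) / 2`.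
-/

/-- The length function of the product Coxeter system `(W')^l`: the sum of the factor
lengths. -/
noncomputable def pLen {B' W' : Type*} [Group W'] {M' : CoxeterMatrix B'}
    (cs' : CoxeterSystem M' W') (l : ℕ) (x : Fin l → W') : ℕ :=
  ∑ i, cs'.length (x i)

/-- A reflection of the product Coxeter system `(W')^l`: a reflection of one factor,
embedded in the product. -/
def PIsReflection {B' W' : Type*} [Group W'] {M' : CoxeterMatrix B'}
    (cs' : CoxeterSystem M' W') (l : ℕ) (r : Fin l → W') : Prop :=
  ∃ (i : Fin l) (t : W'), cs'.IsReflection t ∧ r = Pi.mulSingle i t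

/-- The Bruhat order of the product Coxeter system `(W')^l`: `u ≤ v` iff one can pass
from `u` to `v` by successively multiplying on the right by reflections of the product,
increasing the length at each step. -/
def PBruhatLE {B' W' : Type*} [Group W'] {M' : CoxeterMatrix B'}
    (cs' : CoxeterSystem M' W') (l : ℕ) (u v : Fin l → W') : Prop :=
  Relation.ReflTransGen
    (fun a b => ∃ r : Fin l → W',
      PIsReflection cs' l r ∧ b = a * r ∧ pLen cs' l a < pLen cs' l b) u v

/-- The reflection length in the product Coxeter system `(W')^l`. -/
noncomputable def pReflLength {B' W' : Type*} [Group W'] {M' : CoxeterMatrix B'}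
    (cs' : CoxeterSystem M' W') (l : ℕ) (w : Fin l → W') : ℕ :=
  sInf {n | ∃ L : List (Fin l → W'),
    (∀ r ∈ L, PIsReflection cs' l r) ∧ L.length = n ∧ L.prod = w}

/-- `ℓ_R(O) = min {ℓ_R(w) : w ∈ O}` in the product Coxeter system `(W')^l`. -/
noncomputable def pReflLengthSet {B' W' : Type*} [Group W'] {M' : CoxeterMatrix B'}
    (cs' : CoxeterSystem M' W') (l : ℕ) (O : Set (Fin l → W')) : ℕ :=
  sInf (pReflLength cs' l '' O)

/-- The automorphism `σ(w₁, w₂, …, w_l) = (τ(w_l), w₁, …, w_{l-1})` of `(W')^l`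
(indices in `Fin l`, with cyclic subtraction, so that entry `0` is `τ` applied to the
last entry of `x`). -/
def cyclicShift {W' : Type*} (l : ℕ) [NeZero l] (τ : W' → W') (x : Fin l → W') :
    Fin l → W' :=
  fun i => if i = 0 then τ (x (i - 1)) else x (i - 1)

namespace CoxeterSystem

open List

variable {B W : Type*} [Group W] {M : CoxeterMatrix B} (cs : CoxeterSystem M W)

theorem pow_mul_eq_prod_map_alternatingWord {G : Type*} [Monoid G] (f : B → G) (i i' : B)
    (m : ℕ) : (f i * f i') ^ m = ((alternatingWord i i' (2 * m)).map f).prod := by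
  induction m with
  | zero => simp [alternatingWord]
  | succ m ih =>
    rw [show 2 * (m + 1) = 2 * m + 1 + 1 by ring, alternatingWord_succ', alternatingWord_succ']
    simp [parity_simps, ih, pow_succ', mul_assoc]

theorem wordProd_alternatingWord_add_two_mul (i i' : B) (n : ℕ) :
    cs.wordProd (alternatingWord i i' (n + 2 * M i i')) = cs.wordProd (alternatingWord i i' n) := by
  simp only [prod_alternatingWord_eq_mul_pow, Nat.add_mul_div_left _ _ two_pos, pow_add,
    simple_mul_simple_pow, mul_one]
  simp [parity_simps]

theorem wordProd_alternatingWord_two_mul (i i' : B) :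
    cs.wordProd (alternatingWord i i' (2 * M i i')) = 1 := by
  simpa [alternatingWord] using cs.wordProd_alternatingWord_add_two_mul i i' 0

theorem leftInvSeq_eq_map_rightInvSeq (ω : List B) :
    cs.leftInvSeq ω = (cs.rightInvSeq ω).map (MulAut.conj (cs.wordProd ω)) := by
  induction ω with
  | nil => simp
  | cons i ω ih =>
    simp only [leftInvSeq, rightInvSeq, ih, map_map, map_cons, wordProd_cons, cons.injEq]
    constructor
    · simp [mul_assoc]
    · congr 1
      ext t
      simp [mul_assoc]

theorem leftInvSeq_alternatingWord_eq_append (i i' : B) :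
    cs.leftInvSeq (alternatingWord i i' (2 * M i i')) =
      (cs.leftInvSeq (alternatingWord i i' (2 * M i i'))).take (M i i') ++
      (cs.leftInvSeq (alternatingWord i i' (2 * M i i'))).take (M i i') := by
  set L := cs.leftInvSeq (alternatingWord i i' (2 * M i i'))
  conv_lhs => rw [← take_append_drop (M i i') L]
  congr 1
  apply ext_getElem
  · simp only [L, length_drop, length_take, length_leftInvSeq, length_alternatingWord]
    omega
  · intro k h₁ h₂
    simp only [L, length_drop, length_leftInvSeq, length_alternatingWord] at h₁
    rw [getElem_drop, getElem_take, getElem_leftInvSeq_alternatingWord _ _ _ _ _ (by omega),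
      getElem_leftInvSeq_alternatingWord _ _ _ _ _ (by omega),
      show 2 * (M i i' + k) + 1 = 2 * k + 1 + 2 * M i' i by rw [M.symmetric]; ring,
      wordProd_alternatingWord_add_two_mul]

theorem even_count_rightInvSeq_alternatingWord [DecidableEq W] (i i' : B) (w : W) :
    Even ((cs.rightInvSeq (alternatingWord i i' (2 * M i i'))).count w) := by
  have h := cs.leftInvSeq_eq_map_rightInvSeq (alternatingWord i i' (2 * M i i'))
  rw [wordProd_alternatingWord_two_mul, map_one, MulAut.one_def, MulEquiv.coe_refl, map_id] at h
  rw [← h, leftInvSeq_alternatingWord_eq_append, count_append]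
  exact ⟨_, rfl⟩

theorem simple_mul_mul_simple_eq_simple_iff (i : B) (w : W) :
    cs.simple i * w * cs.simple i = cs.simple i ↔ w = cs.simple i := by
  constructor
  · intro h
    calc w = cs.simple i * (cs.simple i * w * cs.simple i) * cs.simple i := by simp [mul_assoc]
      _ = cs.simple i := by simp [h]
  · rintro rfl
    simp

section signAction

variable [DecidableEq W]

def signPerm (i : B) : Equiv.Perm (W × ℤˣ) :=
  Function.Involutive.toPerm
    (fun p => (cs.simple i * p.1 * cs.simple i, if p.1 = cs.simple i then -p.2 else p.2))
    (by
      rintro ⟨w, e⟩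
      simp only [simple_mul_mul_simple_eq_simple_iff, Prod.mk.injEq]
      refine ⟨by simp [mul_assoc], ?_⟩
      split_ifs <;> simp)

theorem signPerm_apply (i : B) (w : W) (e : ℤˣ) :
    cs.signPerm i (w, e) =
      (cs.simple i * w * cs.simple i, if w = cs.simple i then -e else e) :=
  rfl

theorem prod_map_signPerm_apply (ω : List B) (w : W) (e : ℤˣ) :
    (ω.map cs.signPerm).prod (w, e) =
      (cs.wordProd ω * w * (cs.wordProd ω)⁻¹, (-1) ^ (cs.rightInvSeq ω).count w * e) := by
  induction ω with
  | nil => simp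
  | cons i ω ih =>
    have hconj : cs.wordProd ω * w * (cs.wordProd ω)⁻¹ = cs.simple i ↔
        (cs.wordProd ω)⁻¹ * cs.simple i * cs.wordProd ω = w := by
      constructor <;> intro h <;> rw [← h] <;> group
    rw [map_cons, prod_cons, Equiv.Perm.mul_apply, ih]
    simp only [signPerm_apply, hconj, rightInvSeq, count_cons, beq_iff_eq, wordProd_cons]
    refine Prod.ext (by simp only [mul_inv_rev, inv_simple, mul_assoc]) ?_
    split_ifs <;> simp [pow_succ]

theorem isLiftable_signPerm : M.IsLiftable cs.signPerm := by
  intro i i'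
  ext ⟨w, e⟩ : 1
  rw [pow_mul_eq_prod_map_alternatingWord, prod_map_signPerm_apply,
    wordProd_alternatingWord_two_mul,
    (cs.even_count_rightInvSeq_alternatingWord i i' w).neg_one_pow]
  simp

def signAction : W →* Equiv.Perm (W × ℤˣ) :=
  cs.lift ⟨cs.signPerm, cs.isLiftable_signPerm⟩

def inversionSign (w t : W) : ℤˣ :=
  (cs.signAction w (t, 1)).2

theorem signAction_wordProd (ω : List B) :
    cs.signAction (cs.wordProd ω) = (ω.map cs.signPerm).prod := by
  rw [wordProd, map_list_prod, map_map]
  congr 2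
  ext i : 1
  exact cs.lift_apply_simple _ i

theorem inversionSign_wordProd (ω : List B) (t : W) :
    cs.inversionSign (cs.wordProd ω) t = (-1) ^ (cs.rightInvSeq ω).count t := by
  simp [inversionSign, signAction_wordProd, prod_map_signPerm_apply]

theorem signAction_apply (w t : W) (e : ℤˣ) :
    cs.signAction w (t, e) = (w * t * w⁻¹, cs.inversionSign w t * e) := by
  obtain ⟨ω, rfl⟩ := cs.wordProd_surjective w
  simp [inversionSign, signAction_wordProd, prod_map_signPerm_apply]

theorem inversionSign_mul (a b t : W) :
    cs.inversionSign (a * b) t = cs.inversionSign a (b * t * b⁻¹) * cs.inversionSign b t := by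
  rw [inversionSign, map_mul, Equiv.Perm.mul_apply, signAction_apply, signAction_apply, mul_one]

theorem inversionSign_one (t : W) : cs.inversionSign 1 t = 1 := by
  simp [inversionSign]

theorem inversionSign_simple_self (i : B) : cs.inversionSign (cs.simple i) (cs.simple i) = -1 := by
  simpa using cs.inversionSign_wordProd [i] (cs.simple i)

theorem inversionSign_self {t : W} (ht : cs.IsReflection t) : cs.inversionSign t t = -1 := by
  obtain ⟨u, i, rfl⟩ := ht
  have hconj : u⁻¹ * (u * cs.simple i * u⁻¹) * u⁻¹⁻¹ = cs.simple i := by group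
  have hcancel := cs.inversionSign_mul u u⁻¹ (u * cs.simple i * u⁻¹)
  rw [mul_inv_cancel, inversionSign_one, hconj] at hcancel
  rw [inversionSign_mul, inversionSign_mul, hconj, mul_inv_cancel_right,
    inversionSign_simple_self, mul_right_comm, ← hcancel, one_mul]

theorem isRightInversion_of_inversionSign_eq_neg_one {w t : W}
    (h : cs.inversionSign w t = -1) : cs.IsRightInversion w t := by
  obtain ⟨ω, hω, rfl⟩ := cs.exists_isReduced w
  refine cs.isRightInversion_of_mem_rightInvSeq hω (count_pos_iff.mp (Nat.pos_of_ne_zero ?_))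
  intro h0
  rw [inversionSign_wordProd, h0, pow_zero] at h
  exact absurd h (by decide)

theorem isRightInversion_iff_inversionSign_eq_neg_one (w t : W) :
    cs.IsRightInversion w t ↔ cs.inversionSign w t = -1 := by
  refine ⟨fun h => ?_, cs.isRightInversion_of_inversionSign_eq_neg_one⟩
  obtain ⟨ht, hlt⟩ := h
  by_contra hne
  have hsign : cs.inversionSign (w * t) t = -1 := by
    have hmul := cs.inversionSign_mul (w * t) t t
    rw [mul_inv_cancel_right, mul_assoc, ht.mul_self, mul_one, inversionSign_self _ ht,
      (Int.units_eq_one_or _).resolve_right hne, mul_neg_one] at hmul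
    exact neg_eq_iff_eq_neg.mp hmul.symm
  have hlt' := (cs.isRightInversion_of_inversionSign_eq_neg_one hsign).2
  rw [mul_assoc, ht.mul_self, mul_one] at hlt'
  omega

end signAction

theorem isRightInversion_or_of_isRightInversion_mul {a b t : W}
    (h : cs.IsRightInversion (a * b) t) :
    cs.IsRightInversion b t ∨ cs.IsRightInversion a (b * t * b⁻¹) := by
  classical
  simp only [isRightInversion_iff_inversionSign_eq_neg_one, inversionSign_mul] at h ⊢
  rcases Int.units_eq_one_or (cs.inversionSign b t) with hb | hb
  · rw [hb, mul_one] at h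
    exact Or.inr h
  · exact Or.inl hb

theorem length_mul_add_length_of_forall_isRightDescent {w : W} (hw : ∀ i, cs.IsRightDescent w i)
    (u : W) : cs.length (w * u) + cs.length u = cs.length w := by
  induction hu : cs.length u generalizing u with
  | zero => simp [cs.length_eq_zero_iff.mp hu]
  | succ n ih =>
    obtain ⟨i, hi⟩ := cs.exists_leftDescent_of_ne_one (w := u) (by rintro rfl; simp at hu)
    obtain ⟨u', rfl⟩ : ∃ u', u = cs.simple i * u' := ⟨cs.simple i * u, by simp⟩
    have hu' : cs.length u' = n := by
      have := cs.length_simple_mul u' i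
      simp only [IsLeftDescent, simple_mul_simple_cancel_left] at hi
      omega
    have hsplit : cs.IsRightInversion ((w * u') * u'⁻¹) (cs.simple i) := by
      rw [mul_inv_cancel_right, isRightInversion_simple_iff_isRightDescent]
      exact hw i
    rcases cs.isRightInversion_or_of_isRightInversion_mul hsplit with hinv | hinv
    · have := hinv.2
      rw [show u'⁻¹ * cs.simple i = (cs.simple i * u')⁻¹ by simp, length_inv, length_inv] at this
      omega
    · have hlt := hinv.2
      rw [show w * u' * (u'⁻¹ * cs.simple i * u'⁻¹⁻¹) = w * (cs.simple i * u') by group] at hlt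
      have := ih u' hu'
      have := cs.length_le_length_mul_add_right w (cs.simple i * u')
      omega

theorem isRightDescent_of_forall_length_le {w : W} (hw : ∀ v, cs.length v ≤ cs.length w) (i : B) :
    cs.IsRightDescent w i :=
  lt_of_le_of_ne (hw _) (cs.length_mul_simple_ne w i)

theorem length_mul_add_length_of_forall_length_le {w₀ : W} (hw₀ : ∀ v, cs.length v ≤ cs.length w₀)
    (u : W) : cs.length (u * w₀) + cs.length u = cs.length w₀ := by
  have hdesc := cs.isRightDescent_of_forall_length_le (w := w₀⁻¹) (by simpa using hw₀)
  simpa [← mul_inv_rev] using cs.length_mul_add_length_of_forall_isRightDescent hdesc u⁻¹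

theorem mul_self_eq_one_of_forall_length_le {w₀ : W} (hw₀ : ∀ v, cs.length v ≤ cs.length w₀) :
    w₀ * w₀ = 1 := by
  have := cs.length_mul_add_length_of_forall_length_le hw₀ w₀
  exact cs.length_eq_zero_iff.mp (by omega)

end CoxeterSystem

section ProductCoxeterSystem

variable {B' W' : Type*} [Group W'] {M' : CoxeterMatrix B'} (cs' : CoxeterSystem M' W') {l : ℕ}

theorem pLen_le_of_pBruhatLE {u v : Fin l → W'} (h : PBruhatLE cs' l u v) :
    pLen cs' l u ≤ pLen cs' l v := by
  induction h with
  | refl => exact le_rfl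
  | tail _ hstep ih => exact ih.trans hstep.choose_spec.2.2.le

theorem pLen_cyclicShift [NeZero l] {τ : W' → W'} (hτ : ∀ w, cs'.length (τ w) = cs'.length w)
    (y : Fin l → W') : pLen cs' l (cyclicShift l τ y) = pLen cs' l y := by
  have hshift : ∀ i, cs'.length (cyclicShift l τ y i) = cs'.length (y (i - 1)) := by
    intro i
    unfold cyclicShift
    split_ifs <;> simp [hτ]
  simp only [pLen, hshift]
  exact Fintype.sum_equiv (Equiv.subRight 1) _ _ fun _ => rfl

theorem pLen_mul_const_add_pLen {w₀' : W'} (hw₀' : ∀ w, cs'.length w ≤ cs'.length w₀')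
    (y : Fin l → W') :
    pLen cs' l (y * fun _ => w₀') + pLen cs' l y = pLen cs' l fun _ => w₀' := by
  simp only [pLen, ← Finset.sum_add_distrib, Pi.mul_apply,
    cs'.length_mul_add_length_of_forall_length_le hw₀']

theorem pReflLength_one : pReflLength cs' l 1 = 0 :=
  Nat.sInf_eq_zero.mpr (Or.inl ⟨[], by simp, rfl, rfl⟩)

end ProductCoxeterSystem

theorem Fin.even_val_sub_one_iff {l : ℕ} [NeZero l] (hl : Even l) (i : Fin l) :
    Even ((i - 1 : Fin l) : ℕ) ↔ ¬ Even (i : ℕ) := by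
  have hl2 : 2 ≤ l := by
    obtain ⟨k, hk⟩ := hl
    have := NeZero.ne l
    omega
  rw [Fin.val_sub, Fin.val_one', Nat.mod_eq_of_lt hl2, Nat.even_iff, Nat.even_iff,
    Nat.mod_mod_of_dvd _ (even_iff_two_dvd.mp hl)]
  rw [Nat.even_iff] at hl
  omega

theorem exists_cyclicShift_eq_mul_const {G : Type*} [Group G] {l : ℕ} [NeZero l] (hl : Even l)
    {τ : G → G} (hτ : τ 1 = 1) {a : G} (ha : a * a = 1) :
    ∃ x : Fin l → G, cyclicShift l τ x = x * fun _ => a := by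
  set x : Fin l → G := fun i => if Even (i : ℕ) then a else 1
  have hx (i : Fin l) : x (i - 1) = x i * a := by
    simp only [x, Fin.even_val_sub_one_iff hl]
    split_ifs <;> simp [ha]
  have hlast : x (0 - 1) = 1 := by
    rw [hx, show x 0 = a by simp [x], ha]
  refine ⟨x, funext fun i => ?_⟩
  change (if i = 0 then τ (x (i - 1)) else x (i - 1)) = x i * a
  split_ifs with h0
  · rw [h0, hlast, hτ, ← hx, hlast]
  · exact hx i

theorem statement11_general {B' W' : Type*} [Group W'] {M' : CoxeterMatrix B'}
    (cs' : CoxeterSystem M' W')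
    (w₀' : W') (hw₀' : ∀ w, cs'.length w ≤ cs'.length w₀')
    (τ : W' ≃* W') (hτ : ∀ w, cs'.length (τ w) = cs'.length w)
    (l : ℕ) [NeZero l] (hl : Even l) :
    (1 : Fin l → W') ∈
        {w | ∃ x : Fin l → W', w = x * (fun _ => w₀') * (cyclicShift l (⇑τ) x)⁻¹} ∧
    pReflLengthSet cs' l
        {w | ∃ x : Fin l → W', w = x * (fun _ => w₀') * (cyclicShift l (⇑τ) x)⁻¹} = 0 ∧
    sSup {n : ℕ | ∃ x : Fin l → W',
        PBruhatLE cs' l x (cyclicShift l (⇑τ) x * fun _ => w₀') ∧ pLen cs' l x = n} =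
      pLen cs' l (fun _ => w₀') / 2 := by
  have hsum (y : Fin l → W') :
      pLen cs' l (cyclicShift l τ y * fun _ => w₀') + pLen cs' l y = pLen cs' l fun _ => w₀' := by
    rw [← pLen_cyclicShift cs' hτ y]
    exact pLen_mul_const_add_pLen cs' hw₀' _
  have hsq := cs'.mul_self_eq_one_of_forall_length_le hw₀'
  obtain ⟨x, hx⟩ := exists_cyclicShift_eq_mul_const hl (map_one τ) hsq
  have hone : (1 : Fin l → W') = x * (fun _ => w₀') * (cyclicShift l τ x)⁻¹ := by
    rw [hx, mul_inv_cancel]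
  have hfix : cyclicShift l τ x * (fun _ => w₀') = x := by
    rw [hx, mul_assoc]
    exact mul_eq_left.mpr (funext fun _ => hsq)
  refine ⟨⟨x, hone⟩, Nat.sInf_eq_zero.mpr (Or.inl ⟨1, ⟨x, hone⟩, pReflLength_one cs'⟩), ?_⟩
  refine IsGreatest.csSup_eq ⟨⟨x, by rw [hfix]; exact .refl, ?_⟩, ?_⟩
  · have := hsum x
    rw [hfix] at this
    omega
  · rintro _ ⟨y, hy, rfl⟩
    have := hsum y
    have := pLen_le_of_pBruhatLE cs' hy
    omega

/-- Let `(W', S')` be a finite Coxeter system with longest element `w₀'`, `τ` a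
length-preserving automorphism of `W'`, `l` a positive even integer, and `W = (W')^l`
with the automorphism `σ(w₁, …, w_l) = (τ(w_l), w₁, …, w_{l-1})`.  Let
`w₀ = (w₀', …, w₀')` and `O` its `σ`-conjugacy class.  Then `1 ∈ O` (so `ℓ_R(O) = 0`),
and `max {ℓ(x) : x ≤ σ(x) w₀} = ℓ(w₀) / 2`. -/
theorem statement11 {B' W' : Type*} [Group W'] [Finite W'] {M' : CoxeterMatrix B'}
    (cs' : CoxeterSystem M' W')
    (w₀' : W') (hw₀' : ∀ w, cs'.length w ≤ cs'.length w₀')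
    (τ : W' ≃* W') (hτ : ∀ w, cs'.length (τ w) = cs'.length w)
    (l : ℕ) [NeZero l] (hl : Even l) :
    (1 : Fin l → W') ∈
        {w | ∃ x : Fin l → W', w = x * (fun _ => w₀') * (cyclicShift l (⇑τ) x)⁻¹} ∧
    pReflLengthSet cs' l
        {w | ∃ x : Fin l → W', w = x * (fun _ => w₀') * (cyclicShift l (⇑τ) x)⁻¹} = 0 ∧
    sSup {n : ℕ | ∃ x : Fin l → W',
        PBruhatLE cs' l x (cyclicShift l (⇑τ) x * fun _ => w₀') ∧ pLen cs' l x = n} =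
      pLen cs' l (fun _ => w₀') / 2 :=
  statement11_general cs' w₀' hw₀' τ hτ l hl
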